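/- arXiv:quant-ph/0407223 — 6 statements merged into one kernel-verified Lean document; each statement's English description precedes it below -/
import Mathlib

section
/- Let G be a simple graph on d vertices {0,…,d−1}. Any d×d unitary matrix with all entries nonzero can be reduced to diagonal form by left-multiplication by Givens rotations acting only on pairs (j,k) that are edges of G only if G is connected. Conversely (necessity direction): if G is disconnected, there exists a unitary matrix U with no zero entries that cannot be reduced to diagonal form using only rotations on edges of G. -/
open Matrix

/-- `A` is a Givens rotation acting on the coordinate plane `(j,k)`: a unitary
matrix equal to the identity outside rows/columns `j,k`. -/
def IsGivensOn {d : ℕ} (j k : Fin d) (A : Matrix (Fin d) (Fin d) ℂ) : Prop :=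
  A ∈ Matrix.unitaryGroup (Fin d) ℂ ∧
    ∀ p q : Fin d, (p ∉ ({j, k} : Set (Fin d)) ∨ q ∉ ({j, k} : Set (Fin d))) →
      A p q = if p = q then 1 else 0

/-- `U` can be reduced to diagonal form by left multiplication by Givens rotations
on planes which are edges of the coupling graph `G`. -/
def ReducibleByGivens {d : ℕ} (G : SimpleGraph (Fin d))
    (U : Matrix (Fin d) (Fin d) ℂ) : Prop :=
  ∃ L : List (Matrix (Fin d) (Fin d) ℂ),
    (∀ A ∈ L, ∃ j k : Fin d, G.Adj j k ∧ IsGivensOn j k A) ∧ (L.prod * U).IsDiag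

/-!
Givens rotations on edges of `G` never mix different connected components of `G`, so they
all lie in the star algebra of matrices that are block diagonal with respect to the
components. If `P * U = D` with `P` a product of such rotations and `D` diagonal, then
`U = Pᴴ D` lies in that algebra as well, so `U u v = 0` whenever `u` and `v` lie in different
components. It therefore suffices to exhibit a unitary with no zero entry. With `J` the
all-ones matrix, `J² = d J` gives `(1 - c J)(1 - c J)ᴴ = 1 - (2 Re c - d |c|²) J`, so
`c = (1 + i) / d` makes `1 - c J` such a unitary.
-/

namespace SimpleGraph

variable {V R : Type*} [Fintype V] [DecidableEq V] [CommSemiring R] [StarRing R]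

variable (R) in
def blockMatrices (G : SimpleGraph V) : StarSubalgebra R (Matrix V V R) where
  carrier := {A | ∀ p q, ¬ G.Reachable p q → A p q = 0}
  mul_mem' {A B} hA hB p q hpq := by
    rw [mul_apply]
    refine Finset.sum_eq_zero fun r _ => ?_
    by_cases hpr : G.Reachable p r
    · rw [hB r q fun hrq => hpq (hpr.trans hrq), mul_zero]
    · rw [hA p r hpr, zero_mul]
  add_mem' {A B} hA hB p q hpq := by simp [hA p q hpq, hB p q hpq]
  algebraMap_mem' c p q hpq := by
    have : p ≠ q := fun h => hpq (h ▸ Reachable.refl p)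
    simp [algebraMap_eq_diagonal, this]
  star_mem' {A} hA p q hpq := by simp [hA q p fun h => hpq h.symm]

theorem _root_.Matrix.IsDiag.mem_blockMatrices (G : SimpleGraph V) {A : Matrix V V R}
    (hA : A.IsDiag) : A ∈ G.blockMatrices R :=
  fun p _ hpq => hA fun h => hpq (h ▸ .refl p)

end SimpleGraph

theorem IsGivensOn.mem_blockMatrices {d : ℕ} {G : SimpleGraph (Fin d)} {j k : Fin d}
    {A : Matrix (Fin d) (Fin d) ℂ} (hjk : G.Adj j k) (hA : IsGivensOn j k A) :
    A ∈ G.blockMatrices ℂ := by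
  intro p q hpq
  have hne : p ≠ q := fun h => hpq (h ▸ .refl p)
  rw [hA.2 p q ?_, if_neg hne]
  by_contra! h
  obtain ⟨rfl | rfl, rfl | rfl⟩ := h
  exacts [hne rfl, hpq hjk.reachable, hpq hjk.reachable.symm, hne rfl]

theorem ReducibleByGivens.mem_blockMatrices {d : ℕ} {G : SimpleGraph (Fin d)}
    {U : Matrix (Fin d) (Fin d) ℂ} (hU : ReducibleByGivens G U) : U ∈ G.blockMatrices ℂ := by
  obtain ⟨L, hL, hdiag⟩ := hU
  have hP_unitary : L.prod ∈ unitaryGroup (Fin d) ℂ :=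
    list_prod_mem fun A hA => by
      obtain ⟨_, _, -, hgivens⟩ := hL A hA
      exact hgivens.1
  have hP_block : L.prod ∈ G.blockMatrices ℂ :=
    list_prod_mem fun A hA => by
      obtain ⟨_, _, hadj, hgivens⟩ := hL A hA
      exact hgivens.mem_blockMatrices hadj
  have hU_eq : U = star L.prod * (L.prod * U) := by
    rw [← Matrix.mul_assoc, mem_unitaryGroup_iff'.1 hP_unitary, Matrix.one_mul]
  rw [hU_eq]
  exact mul_mem (star_mem hP_block) (hdiag.mem_blockMatrices G)

theorem Matrix.one_sub_smul_allOnes_mem_unitaryGroup {ι : Type*} [Fintype ι] [DecidableEq ι]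
    {c : ℂ} (hc : c + star c = Fintype.card ι * (c * star c)) :
    1 - c • of (fun _ _ => 1 : ι → ι → ℂ) ∈ unitaryGroup ι ℂ := by
  set J : Matrix ι ι ℂ := of fun _ _ => 1
  have hJ_star : star J = J := by ext; simp [J]
  have hJ_sq : J * J = (Fintype.card ι : ℂ) • J := by ext; simp [J, mul_apply]
  rw [mem_unitaryGroup_iff, star_sub, star_one, star_smul, hJ_star]
  calc (1 - c • J) * (1 - star c • J)
      = 1 - (c + star c - Fintype.card ι * (c * star c)) • J := by
        simp only [sub_mul, mul_sub, smul_mul_smul_comm, hJ_sq, smul_smul, sub_smul, add_smul,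
          Matrix.one_mul, Matrix.mul_one]
        rw [mul_comm (c * star c)]
        abel
    _ = 1 := by rw [hc, sub_self, zero_smul, sub_zero]

theorem Matrix.exists_mem_unitaryGroup_forall_ne_zero (ι : Type*) [Fintype ι] [DecidableEq ι] :
    ∃ U ∈ unitaryGroup ι ℂ, ∀ i j, U i j ≠ 0 := by
  set c : ℂ := (1 + Complex.I) / Fintype.card ι with hc
  refine ⟨1 - c • of fun _ _ => 1, one_sub_smul_allOnes_mem_unitaryGroup ?_, fun i j => ?_⟩
  · have hc_star : star c = (1 - Complex.I) / Fintype.card ι := by simp [hc, sub_eq_add_neg]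
    rw [hc_star, hc]
    rcases eq_or_ne (Fintype.card ι : ℂ) 0 with hcard | hcard
    · simp [hcard]
    · field_simp
      linear_combination Complex.I_sq
  · have : Nonempty ι := ⟨i⟩
    have hc_im : c.im ≠ 0 := by simp [hc, Fintype.card_ne_zero]
    intro h
    apply hc_im
    by_cases hij : i = j <;> simpa [hij] using congrArg Complex.im h

theorem exists_unitary_not_reducibleByGivens_of_not_preconnected {d : ℕ}
    {G : SimpleGraph (Fin d)} (hG : ¬ G.Preconnected) :
    ∃ U ∈ unitaryGroup (Fin d) ℂ, (∀ i j, U i j ≠ 0) ∧ ¬ ReducibleByGivens G U := by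
  obtain ⟨u, v, huv⟩ : ∃ u v, ¬ G.Reachable u v := by
    simpa [SimpleGraph.Preconnected] using hG
  obtain ⟨U, hU, hU_ne⟩ := exists_mem_unitaryGroup_forall_ne_zero (Fin d)
  exact ⟨U, hU, hU_ne, fun hred => hU_ne u v (hred.mem_blockMatrices u v huv)⟩

/-- Reduction of every nowhere-zero unitary to diagonal form using only rotations
on edges of `G` is possible only if `G` is connected; conversely, if `G` is
disconnected there is a nowhere-zero unitary that cannot be so reduced. -/
theorem coupling_graph_connected_necessary (d : ℕ) (hd : 0 < d)
    (G : SimpleGraph (Fin d)) :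
    ((∀ U : Matrix (Fin d) (Fin d) ℂ, U ∈ Matrix.unitaryGroup (Fin d) ℂ →
        (∀ i j : Fin d, U i j ≠ 0) → ReducibleByGivens G U) → G.Connected) ∧
    (¬ G.Connected → ∃ U : Matrix (Fin d) (Fin d) ℂ,
        U ∈ Matrix.unitaryGroup (Fin d) ℂ ∧ (∀ i j : Fin d, U i j ≠ 0) ∧
        ¬ ReducibleByGivens G U) := by
  have hcounter : ¬ G.Connected → ∃ U : Matrix (Fin d) (Fin d) ℂ,
      U ∈ Matrix.unitaryGroup (Fin d) ℂ ∧ (∀ i j : Fin d, U i j ≠ 0) ∧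
      ¬ ReducibleByGivens G U := fun hG =>
    exists_unitary_not_reducibleByGivens_of_not_preconnected fun hpre =>
      hG ((SimpleGraph.connected_iff G).2 ⟨hpre, ⟨⟨0, hd⟩⟩⟩)
  refine ⟨fun hall => ?_, hcounter⟩
  by_contra hG
  obtain ⟨U, hU, hU_ne, hU_irred⟩ := hcounter hG
  exact hU_irred (hall U hU hU_ne)
end

section
/- If the coupling graph G on d vertices is connected, then any d×d unitary matrix U can be brought to diagonal form using at most d(d−1)/2 Givens rotations on planes corresponding to edges of G. -/
/-!
A vector supported on a vertex set `S` that is connected in `G` can be moved onto any `r ∈ S` by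
`|S| - 1` Givens rotations on edges of `G` inside `S`: take a vertex `w ≠ r` whose removal keeps
`S` connected (a leaf of a spanning tree), clear its entry by a rotation in the plane of `w` and a
neighbour, and recurse on `S \ {w}`. To diagonalize, remove such a `w` and move column `w` onto
`w`; for a unitary matrix this also clears row `w`, which leaves the same problem on `S \ {w}`.
The count is `(|S| - 1) + C(|S| - 1, 2) = C(|S|, 2)`.
-/

open Matrix

open ComplexConjugate Finset

namespace Matrix

section Embedding

variable {m n α : Type*}

/-- The matrix acting as `R` on the coordinates `e i` and as the identity on all others. -/
def extendByOne [Fintype m] [DecidableEq m] [DecidableEq n] [Ring α] (e : m → n)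
    (R : Matrix m m α) : Matrix n n α :=
  1 + (1 : Matrix n n α).submatrix id e * (R - 1) * (1 : Matrix n n α).submatrix e id

theorem one_submatrix_mul_one_submatrix [Fintype n] [DecidableEq m] [DecidableEq n] [Ring α]
    {e : m → n} (he : Function.Injective e) :
    (1 : Matrix n n α).submatrix e id * (1 : Matrix n n α).submatrix id e = 1 := by
  rw [← submatrix_mul _ _ _ _ _ Function.bijective_id, Matrix.one_mul, submatrix_one _ he]

theorem extendByOne_mulVec_apply [Fintype m] [DecidableEq m] [Fintype n] [DecidableEq n]
    [Ring α] {e : m → n} (he : Function.Injective e) (R : Matrix m m α) (u : n → α) (i : m) :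
    (extendByOne e R *ᵥ u) (e i) = (R *ᵥ (u ∘ e)) i := by
  have hE : (1 : Matrix n n α).submatrix e id *ᵥ u = u ∘ e := by
    ext; simp [mulVec, dotProduct, one_apply]
  have hF : ∀ v, ((1 : Matrix n n α).submatrix id e *ᵥ v) (e i) = v i := by
    intro v; simp [mulVec, dotProduct, one_apply, he.eq_iff]
  rw [extendByOne, add_mulVec, ← mulVec_mulVec, ← mulVec_mulVec, hE, Pi.add_apply, hF,
    sub_mulVec]
  simp

theorem extendByOne_mem_unitaryGroup [Fintype m] [DecidableEq m] [Fintype n] [DecidableEq n]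
    [CommRing α] [StarRing α] {e : m → n} (he : Function.Injective e) {R : Matrix m m α}
    (hR : R ∈ unitaryGroup m α) :
    extendByOne e R ∈ unitaryGroup n α := by
  have hR' : (R - 1)ᴴ + (R - 1) + (R - 1)ᴴ * (R - 1) = 0 := by
    have := mem_unitaryGroup_iff'.mp hR
    rw [star_eq_conjTranspose] at this
    rw [conjTranspose_sub, conjTranspose_one]
    calc _ = Rᴴ * R - 1 := by noncomm_ring
      _ = 0 := by rw [this, sub_self]
  rw [mem_unitaryGroup_iff', star_eq_conjTranspose]
  simp only [extendByOne, conjTranspose_add, conjTranspose_mul, conjTranspose_one,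
    conjTranspose_submatrix]
  have hE := one_submatrix_mul_one_submatrix (α := α) he
  generalize (1 : Matrix n n α).submatrix e id = E at *
  generalize (1 : Matrix n n α).submatrix id e = F at *
  generalize R - 1 = X at *
  calc _ = 1 + F * (Xᴴ + X + Xᴴ * (E * F) * X) * E := by
        simp only [Matrix.mul_add, Matrix.add_mul, Matrix.mul_assoc, Matrix.mul_one,
          Matrix.one_mul]
        abel
    _ = 1 := by rw [hE, Matrix.mul_one, hR', Matrix.mul_zero, Matrix.zero_mul, add_zero]

end Embedding

section DiagOutside

variable {n α : Type*} [Zero α]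

def IsDiagOutside (S : Set n) (M : Matrix n n α) : Prop :=
  ∀ p q, p ≠ q → (p ∉ S ∨ q ∉ S) → M p q = 0

theorem IsDiagOutside.diff_singleton {S : Set n} {M : Matrix n n α}
    (hM : IsDiagOutside S M) {w : n} (hcol : ∀ p ≠ w, M p w = 0)
    (hrow : ∀ q ≠ w, M w q = 0) :
    IsDiagOutside (S \ {w}) M := by
  intro p q hpq h
  by_cases hp : p = w
  · exact hp ▸ hrow q (hp ▸ hpq).symm
  by_cases hq : q = w
  · exact hq ▸ hcol p (hq ▸ hpq)
  exact hM p q hpq (by simpa [hp, hq] using h)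

theorem IsDiagOutside.isDiag {S : Set n} {M : Matrix n n α}
    (hM : IsDiagOutside S M) (hS : S.Subsingleton) : M.IsDiag := fun p q hpq =>
  hM p q hpq (not_and_or.mp fun h => hpq (hS h.1 h.2))

end DiagOutside

section IdOutside

variable {n α : Type*} [Fintype n] [DecidableEq n]

def idOutside [NonAssocSemiring α] (S : Set n) : Submonoid (Matrix n n α) where
  carrier := {A | ∀ p q, (p ∉ S ∨ q ∉ S) → A p q = (1 : Matrix n n α) p q}
  one_mem' _ _ _ := rfl
  mul_mem' {A B} hA hB p q h := by
    rcases h with hp | hq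
    · simp_rw [mul_apply, hA p _ (Or.inl hp), ← mul_apply, Matrix.one_mul, hB p q (Or.inl hp)]
    · simp_rw [mul_apply, hB _ q (Or.inr hq), ← mul_apply, Matrix.mul_one, hA p q (Or.inr hq)]

theorem idOutside_mono [NonAssocSemiring α] {S T : Set n} (h : S ⊆ T) :
    idOutside (α := α) S ≤ idOutside T :=
  fun _ hA p q hpq => hA p q (hpq.imp (mt (@h p)) (mt (@h q)))

theorem mulVec_apply_of_mem_idOutside [NonAssocSemiring α] {S : Set n} {P : Matrix n n α}
    (hP : P ∈ idOutside S) (u : n → α) {p : n} (hp : p ∉ S) : (P *ᵥ u) p = u p := by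
  simp_rw [mulVec, dotProduct, hP p _ (Or.inl hp)]
  exact congrFun (one_mulVec u) p

theorem extendByOne_mem_idOutside {m : Type*} [Fintype m] [DecidableEq m] [Ring α] (e : m → n)
    (R : Matrix m m α) : extendByOne e R ∈ idOutside (Set.range e) := by
  intro p q h
  rw [extendByOne, add_apply, add_eq_left, Matrix.mul_assoc]
  rcases h with hp | hq
  · have hp' : ∀ j, p ≠ e j := fun j hj => hp ⟨j, hj.symm⟩
    simp [Matrix.mul_apply, one_apply, hp']
  · simp_all [Matrix.mul_apply, one_apply]

theorem IsDiagOutside.mul_of_mem_idOutside [NonAssocSemiring α] {S : Set n}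
    {P M : Matrix n n α} (hP : P ∈ idOutside S) (hM : IsDiagOutside S M) :
    IsDiagOutside S (P * M) := by
  intro p q hpq h
  rcases h with hp | hq
  · simp_rw [mul_apply, hP p _ (Or.inl hp), ← mul_apply, Matrix.one_mul]
    exact hM p q hpq (Or.inl hp)
  · rw [mul_apply, Finset.sum_eq_single q (fun c _ hc => by rw [hM c q hc (Or.inr hq), mul_zero])
      (by simp), hP p q (Or.inr hq), one_apply_ne hpq, zero_mul]

end IdOutside

theorem apply_eq_zero_of_mem_unitaryGroup {n α : Type*} [Fintype n] [DecidableEq n] [Field α]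
    [StarRing α] {M : Matrix n n α} (hM : M ∈ unitaryGroup n α) {w : n}
    (hcol : ∀ p ≠ w, M p w = 0) {q : n} (hq : q ≠ w) : M w q = 0 := by
  have key : ∀ q, star (M w q) * M w w = (1 : Matrix n n α) q w := by
    intro q
    rw [← mem_unitaryGroup_iff'.mp hM, mul_apply, Finset.sum_eq_single w]
    · rfl
    · intro c _ hc; rw [hcol c hc, mul_zero]
    · simp
  have hww : M w w ≠ 0 := by
    intro h; simpa [h] using key w
  simpa [one_apply_ne hq, hww] using key q

theorem conj_conj_neg_mem_unitaryGroup {c s : ℂ} (h : Complex.normSq c + Complex.normSq s = 1) :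
    !![conj c, conj s; -s, c] ∈ unitaryGroup (Fin 2) ℂ := by
  have h' : c * conj c + s * conj s = 1 := by
    rw [Complex.mul_conj, Complex.mul_conj]; exact_mod_cast h
  rw [mem_unitaryGroup_iff', star_eq_conjTranspose]
  ext i j
  fin_cases i <;> fin_cases j <;> simp [Matrix.mul_apply, Fin.sum_univ_two] <;> grind

theorem exists_mem_unitaryGroup_mulVec_apply_one_eq_zero (v : Fin 2 → ℂ) :
    ∃ R ∈ unitaryGroup (Fin 2) ℂ, (R *ᵥ v) 1 = 0 := by
  by_cases hv : v 1 = 0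
  · exact ⟨1, one_mem _, by simp [hv]⟩
  have hpos : 0 < Complex.normSq (v 0) + Complex.normSq (v 1) :=
    add_pos_of_nonneg_of_pos (Complex.normSq_nonneg _) (Complex.normSq_pos.mpr hv)
  set r : ℝ := √(Complex.normSq (v 0) + Complex.normSq (v 1))
  have hr : r * r = Complex.normSq (v 0) + Complex.normSq (v 1) := Real.mul_self_sqrt hpos.le
  refine ⟨_, conj_conj_neg_mem_unitaryGroup (c := v 0 / r) (s := v 1 / r) ?_, ?_⟩
  · rw [Complex.normSq_div, Complex.normSq_div, Complex.normSq_ofReal, ← add_div, hr,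
      div_self hpos.ne']
  · simp only [mulVec, dotProduct, Fin.sum_univ_two, of_apply, cons_val_one, cons_val_zero]
    ring

end Matrix

namespace SimpleGraph

variable {V : Type*} {G : SimpleGraph V}

theorem Connected.exists_ne_connected_induce_compl_singleton [Finite V] [Nontrivial V]
    (hG : G.Connected) (r : V) : ∃ v, v ≠ r ∧ (G.induce {v}ᶜ).Connected := by
  classical
  have := Fintype.ofFinite V
  obtain ⟨T, hTG, hT⟩ := hG.exists_isTree_le
  obtain ⟨u, v, huv, hu, hv⟩ := hT.exists_ne_and_degree_eq_one
  have of_leaf : ∀ w, T.degree w = 1 → (G.induce {w}ᶜ).Connected := fun w hw =>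
    (hT.connected.induce_compl_singleton_of_degree_eq_one hw).mono fun _ _ h => hTG h
  by_cases hur : u = r
  · exact ⟨v, fun hvr => huv (hur.trans hvr.symm), of_leaf v hv⟩
  · exact ⟨u, hur, of_leaf u hu⟩

theorem exists_mem_ne_connected_induce_erase [DecidableEq V] {S : Finset V}
    (hS : (G.induce (S : Set V)).Connected) (hS2 : S.Nontrivial) {r : V} (hr : r ∈ S) :
    ∃ v ∈ S, v ≠ r ∧ (G.induce (S.erase v : Set V)).Connected := by
  have : Nontrivial S := Set.nontrivial_coe_sort.mpr (Finset.nontrivial_coe.mpr hS2)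
  obtain ⟨⟨v, hv⟩, hvr, hconn⟩ := hS.exists_ne_connected_induce_compl_singleton ⟨r, hr⟩
  refine ⟨v, hv, fun h => hvr (Subtype.ext h), hconn.map ?_ ?_⟩
  · exact ⟨fun p => ⟨p.1.1, Finset.mem_erase.mpr ⟨fun h => p.2 (Subtype.ext h), p.1.2⟩⟩,
      id⟩
  · rintro ⟨p, hp⟩
    obtain ⟨hpv, hpS⟩ := Finset.mem_erase.mp hp
    exact ⟨⟨⟨p, hpS⟩, fun h => hpv (congrArg Subtype.val h)⟩, rfl⟩

theorem exists_adj_of_connected_induce {S : Finset V}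
    (hS : (G.induce (S : Set V)).Connected) (hS2 : S.Nontrivial) {v : V} (hv : v ∈ S) :
    ∃ x ∈ S, G.Adj x v := by
  have : Nontrivial S := Set.nontrivial_coe_sort.mpr (Finset.nontrivial_coe.mpr hS2)
  obtain ⟨⟨x, hx⟩, hadj⟩ := hS.preconnected.exists_adj_of_nontrivial ⟨v, hv⟩
  exact ⟨x, hx, hadj.symm⟩

end SimpleGraph

section Givens

variable {d : ℕ}

theorem isGivensOn_iff {j k : Fin d} {A : Matrix (Fin d) (Fin d) ℂ} :
    IsGivensOn j k A ↔ A ∈ unitaryGroup (Fin d) ℂ ∧ A ∈ idOutside {j, k} :=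
  Iff.rfl

theorem exists_isGivensOn_mulVec_apply_eq_zero {x w : Fin d} (hxw : x ≠ w) (u : Fin d → ℂ) :
    ∃ A, IsGivensOn x w A ∧ (A *ᵥ u) w = 0 := by
  obtain ⟨R, hR, hRu⟩ := exists_mem_unitaryGroup_mulVec_apply_one_eq_zero (u ∘ ![x, w])
  have he : Function.Injective ![x, w] := by
    intro i j; fin_cases i <;> fin_cases j <;> simp [hxw, hxw.symm]
  refine ⟨extendByOne ![x, w] R,
    isGivensOn_iff.mpr ⟨extendByOne_mem_unitaryGroup he hR, ?_⟩, ?_⟩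
  · simpa only [range_cons_cons_empty] using extendByOne_mem_idOutside (α := ℂ) ![x, w] R
  · exact (extendByOne_mulVec_apply he R u 1).trans hRu

variable (G : SimpleGraph (Fin d))

theorem exists_givens_list_mulVec_apply_eq_zero {S : Finset (Fin d)}
    (hS : (G.induce (S : Set (Fin d))).Connected) {r : Fin d} (hr : r ∈ S) (u : Fin d → ℂ)
    (hu : ∀ p ∉ S, u p = 0) :
    ∃ L : List (Matrix (Fin d) (Fin d) ℂ), L.length ≤ #S - 1 ∧
      (∀ A ∈ L, ∃ j k : Fin d, G.Adj j k ∧ IsGivensOn j k A) ∧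
      L.prod ∈ idOutside (S : Set (Fin d)) ∧ ∀ p ≠ r, (L.prod *ᵥ u) p = 0 := by
  induction S using Finset.strongInduction generalizing u with
  | H S ih =>
  by_cases hS2 : S.Nontrivial
  · obtain ⟨w, hwS, hwr, hconn⟩ := SimpleGraph.exists_mem_ne_connected_induce_erase hS hS2 hr
    obtain ⟨x, hxS, hxw⟩ := SimpleGraph.exists_adj_of_connected_induce hS hS2 hwS
    obtain ⟨A, hA, hAu⟩ := exists_isGivensOn_mulVec_apply_eq_zero hxw.ne u
    have hAS : A ∈ idOutside (S : Set (Fin d)) :=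
      idOutside_mono (by simp [Set.insert_subset_iff, hxS, hwS]) (isGivensOn_iff.mp hA).2
    have hAu_supp : ∀ p ∉ S.erase w, (A *ᵥ u) p = 0 := by
      intro p hp
      by_cases hpw : p = w
      · exact hpw ▸ hAu
      have hpS : p ∉ S := fun h => hp (Finset.mem_erase.mpr ⟨hpw, h⟩)
      rw [mulVec_apply_of_mem_idOutside hAS u hpS, hu p hpS]
    obtain ⟨L, hlen, hgiv, hLS, hLu⟩ := ih _ (Finset.erase_ssubset hwS) hconn
      (Finset.mem_erase.mpr ⟨hwr.symm, hr⟩) _ hAu_supp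
    refine ⟨L ++ [A], ?_, ?_, ?_, ?_⟩
    · have := Finset.card_erase_add_one hwS
      have := Finset.one_lt_card_iff_nontrivial.mpr hS2
      simp only [List.length_append, List.length_singleton]
      omega
    · exact List.forall_mem_append.mpr
        ⟨hgiv, List.forall_mem_singleton.mpr ⟨x, w, hxw, hA⟩⟩
    · rw [List.prod_append, List.prod_singleton]
      exact mul_mem (idOutside_mono (by simp) hLS) hAS
    · intro p hp
      rw [List.prod_append, List.prod_singleton, ← mulVec_mulVec]
      exact hLu p hp
  · refine ⟨[], by simp, by simp, one_mem _, fun p hp => ?_⟩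
    simpa using hu p fun hpS => hp (Set.not_nontrivial_iff.mp hS2 hpS hr)

theorem exists_givens_list_isDiag_mul {S : Finset (Fin d)}
    (hS : (G.induce (S : Set (Fin d))).Connected) {M : Matrix (Fin d) (Fin d) ℂ}
    (hM : M ∈ unitaryGroup (Fin d) ℂ) (hMS : IsDiagOutside (S : Set (Fin d)) M) :
    ∃ L : List (Matrix (Fin d) (Fin d) ℂ), L.length ≤ (#S).choose 2 ∧
      (∀ A ∈ L, ∃ j k : Fin d, G.Adj j k ∧ IsGivensOn j k A) ∧ (L.prod * M).IsDiag := by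
  induction S using Finset.strongInduction generalizing M with
  | H S ih =>
  by_cases hS2 : S.Nontrivial
  · obtain ⟨r, hr⟩ := hS2.nonempty
    obtain ⟨w, hwS, -, hconn⟩ := SimpleGraph.exists_mem_ne_connected_induce_erase hS hS2 hr
    obtain ⟨L₁, hlen₁, hgiv₁, hL₁S, hcol⟩ :=
      exists_givens_list_mulVec_apply_eq_zero G hS hwS
        (fun p => M p w) fun p hp => hMS p w (ne_of_mem_of_not_mem hwS hp).symm (Or.inl hp)
    set M₁ := L₁.prod * M
    have hM₁ : M₁ ∈ unitaryGroup (Fin d) ℂ := by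
      refine mul_mem (list_prod_mem fun A hA => ?_) hM
      obtain ⟨_, _, -, hgivA⟩ := hgiv₁ A hA
      exact hgivA.1
    have hM₁S : IsDiagOutside (S.erase w : Set (Fin d)) M₁ := by
      rw [Finset.coe_erase]
      exact (hMS.mul_of_mem_idOutside hL₁S).diff_singleton hcol
        fun q hq => apply_eq_zero_of_mem_unitaryGroup hM₁ hcol hq
    obtain ⟨L₂, hlen₂, hgiv₂, hdiag⟩ := ih _ (Finset.erase_ssubset hwS) hconn hM₁ hM₁S
    refine ⟨L₂ ++ L₁, ?_, ?_, ?_⟩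
    · have hcard := Finset.card_erase_add_one hwS
      calc (L₂ ++ L₁).length = L₂.length + L₁.length := List.length_append
        _ ≤ (#(S.erase w)).choose 2 + #(S.erase w) := by omega
        _ = (#S).choose 2 := by
          rw [← hcard, Nat.choose_succ_succ' _ 1, Nat.choose_one_right, add_comm]
    · exact List.forall_mem_append.mpr ⟨hgiv₂, hgiv₁⟩
    · rwa [List.prod_append, Matrix.mul_assoc]
  · exact ⟨[], by simp, by simp, by simpa using hMS.isDiag (Set.not_nontrivial_iff.mp hS2)⟩

end Givens

/-- If the coupling graph is connected, any unitary can be brought to diagonal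
form by at most d(d−1)/2 Givens rotations on planes which are edges of `G`. -/
theorem connected_coupling_graph_diagonalizes (d : ℕ) (G : SimpleGraph (Fin d))
    (hG : G.Connected) (U : Matrix (Fin d) (Fin d) ℂ)
    (hU : U ∈ Matrix.unitaryGroup (Fin d) ℂ) :
    ∃ L : List (Matrix (Fin d) (Fin d) ℂ),
      L.length ≤ d * (d - 1) / 2 ∧
      (∀ A ∈ L, ∃ j k : Fin d, G.Adj j k ∧ IsGivensOn j k A) ∧
      (L.prod * U).IsDiag := by
  have hconn : (G.induce ((Finset.univ : Finset (Fin d)) : Set (Fin d))).Connected := by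
    rw [Finset.coe_univ]
    exact (SimpleGraph.induceUnivIso G).connected_iff.mpr hG
  obtain ⟨L, hlen, hgiv, hdiag⟩ :=
    exists_givens_list_isDiag_mul G hconn hU fun p q _ h => by simp at h
  refine ⟨L, ?_, hgiv, hdiag⟩
  rwa [Finset.card_univ, Fintype.card_fin, Nat.choose_two_right] at hlen
end

section
/- If the coupling graph is connected, then any diagonal unitary T = ∑_j e^{iφ_j} |j⟩⟨j| on ℂ^d can be written, up to a global phase, as a product of d−1 commuting evolutions exp(−i θ_l (|j_l⟩⟨j_l| − |k_l⟩⟨k_l|)) where each pair (j_l,k_l) is an edge of a spanning tree of the graph. -/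
/-!
All factors are diagonal, so the product is the diagonal matrix with entries
`exp (-i ∑_l θ_l (δ_{j, j_l} - δ_{j, k_l}))`. It therefore suffices to write the real vector
`(α - φ_j)_j` as a combination of the incidence vectors `e_{j_l} - e_{k_l}` of the tree edges.
For a connected graph these span the hyperplane of vectors with zero sum (telescope `e_u - e_r`
along a path from `u` to a root `r`), and choosing `α` to be the mean of the `φ_j` puts the
vector into that hyperplane. A spanning tree of a graph on `n + 1` vertices has `n` edges.
-/

open Matrix Complex

/-- The generator H^z_{jk} = |j⟩⟨j| − |k⟩⟨k|. -/
def Hz {d : ℕ} (j k : Fin d) : Matrix (Fin d) (Fin d) ℂ :=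
  Matrix.single j j 1 - Matrix.single k k 1

namespace SimpleGraph

variable {V R : Type*} [DecidableEq V] [Ring R] {H : SimpleGraph V} {S : Submodule R (V → R)}

theorem Reachable.single_sub_single_mem
    (hS : ∀ u v, H.Adj u v → (Pi.single u 1 - Pi.single v 1 : V → R) ∈ S) {u v : V}
    (h : H.Reachable u v) : (Pi.single u 1 - Pi.single v 1 : V → R) ∈ S := by
  obtain ⟨p⟩ := h
  induction p with
  | nil => simp
  | @cons u w v huw _ ih => simpa using S.add_mem (hS u w huw) ih

theorem Connected.mem_of_sum_eq_zero [Fintype V] (hH : H.Connected)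
    (hS : ∀ u v, H.Adj u v → (Pi.single u 1 - Pi.single v 1 : V → R) ∈ S) {ψ : V → R}
    (hψ : ∑ v, ψ v = 0) : ψ ∈ S := by
  obtain ⟨r⟩ := hH.nonempty
  have hψ_eq : ψ = ∑ v, ψ v • (Pi.single v 1 - Pi.single r 1 : V → R) := by
    simp only [smul_sub, Finset.sum_sub_distrib, ← Finset.sum_smul, hψ, zero_smul, sub_zero]
    ext i
    simp [Pi.single_apply]
  rw [hψ_eq]
  exact S.sum_mem fun v _ => S.smul_mem _ ((hH.preconnected v r).single_sub_single_mem hS)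

end SimpleGraph

theorem exists_sum_smul_eq_of_fromEdgeSet_connected {V R ι : Type*} [Fintype V] [DecidableEq V]
    [Ring R] [Fintype ι] (e : ι → V × V)
    (he : (SimpleGraph.fromEdgeSet (Set.range fun l => s((e l).1, (e l).2))).Connected)
    {ψ : V → R} (hψ : ∑ v, ψ v = 0) :
    ∃ c : ι → R, ∑ l, c l • (Pi.single (e l).1 1 - Pi.single (e l).2 1 : V → R) = ψ := by
  rw [← Submodule.mem_span_range_iff_exists_fun]
  refine he.mem_of_sum_eq_zero (fun u v huv => ?_) hψ
  obtain ⟨⟨l, hl⟩, -⟩ := (SimpleGraph.fromEdgeSet_adj _).mp huv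
  rcases Sym2.eq_iff.mp hl with ⟨rfl, rfl⟩ | ⟨rfl, rfl⟩
  · exact Submodule.subset_span ⟨l, rfl⟩
  · rw [← neg_sub]
    exact neg_mem (Submodule.subset_span ⟨l, rfl⟩)

theorem SimpleGraph.Connected.exists_spanning_tree_edges {V : Type*} [Fintype V] {n : ℕ}
    (hV : Fintype.card V = n + 1) {G : SimpleGraph V} (hG : G.Connected) :
    ∃ e : Fin n → V × V, (∀ l, G.Adj (e l).1 (e l).2) ∧
      Function.Injective (fun l => s((e l).1, (e l).2)) ∧
      (SimpleGraph.fromEdgeSet (Set.range fun l => s((e l).1, (e l).2))).Connected := by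
  classical
  obtain ⟨T, hTG, hT⟩ := hG.exists_isTree_le
  have hcard : T.edgeFinset.card = n := by have := hT.card_edgeFinset; omega
  let ε : Fin n ≃ T.edgeFinset := (T.edgeFinset.equivFinOfCardEq hcard).symm
  have hε : (fun l => s((ε l).1.out.1, (ε l).1.out.2)) = fun l => (ε l).1 :=
    funext fun l => Quot.out_eq _
  refine ⟨fun l => (ε l).1.out, fun l => hTG ?_, ?_, ?_⟩
  · rw [← SimpleGraph.mem_edgeSet, ← SimpleGraph.mem_edgeFinset]
    exact (congrFun hε l).symm ▸ (ε l).2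
  · rw [hε]
    exact Subtype.val_injective.comp ε.injective
  · rw [hε]
    have hrange : Set.range (fun l => (ε l).1) = T.edgeSet := by
      ext z
      refine ⟨?_, fun hz => ⟨ε.symm ⟨z, T.mem_edgeFinset.mpr hz⟩, by simp⟩⟩
      rintro ⟨l, rfl⟩
      exact T.mem_edgeFinset.mp (ε l).2
    rw [hrange, SimpleGraph.fromEdgeSet_edgeSet]
    exact hT.connected

theorem Hz_eq_diagonal {d : ℕ} (j k : Fin d) :
    Hz j k = diagonal (Pi.single j 1 - Pi.single k 1) := by
  rw [Hz, ← diagonal_single, ← diagonal_single, diagonal_sub]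
  rfl

theorem Matrix.list_prod_ofFn_exp_smul_diagonal {ι : Type*} [Fintype ι] [DecidableEq ι] {m : ℕ}
    (c : Fin m → ℂ) (x : Fin m → ι → ℂ) :
    (List.ofFn fun l => NormedSpace.exp (c l • diagonal (x l))).prod =
      diagonal fun i => Complex.exp (∑ l, c l * x l i) := by
  have hexp : ∀ l, NormedSpace.exp (c l • diagonal (x l)) =
      diagonalRingHom ι ℂ fun i => Complex.exp (c l * x l i) := by
    intro l
    rw [← diagonal_smul, exp_diagonal, diagonalRingHom_apply]
    congr 1
    ext i
    simp [← Complex.exp_eq_exp_ℂ]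
  simp_rw [hexp, Complex.exp_sum]
  rw [← Function.comp_def (diagonalRingHom ι ℂ), ← List.map_ofFn, ← map_list_prod, List.prod_ofFn,
    diagonalRingHom_apply]
  congr 1
  ext i
  simp [Finset.prod_apply]

/-- If the coupling graph is connected, any diagonal unitary can be written, up
to a global phase, as a product of d−1 evolutions exp(−iθ_l H^z) along the
edges of a spanning tree of the graph. -/
theorem diagonal_unitary_from_spanning_tree (n : ℕ)
    (G : SimpleGraph (Fin (n + 1))) (hG : G.Connected)
    (φ : Fin (n + 1) → ℝ) :
    ∃ (e : Fin n → Fin (n + 1) × Fin (n + 1)) (θ : Fin n → ℝ) (α : ℝ),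
      (∀ l, G.Adj (e l).1 (e l).2) ∧
      (Function.Injective fun l => s((e l).1, (e l).2)) ∧
      (SimpleGraph.fromEdgeSet (Set.range fun l => s((e l).1, (e l).2))).Connected ∧
      Complex.exp (I * α) •
        (List.ofFn fun l : Fin n =>
          NormedSpace.exp ((-(I * (θ l : ℂ))) • Hz (e l).1 (e l).2)).prod =
        Matrix.diagonal fun j => Complex.exp (I * φ j) := by
  obtain ⟨e, hadj, hinj, hconn⟩ := hG.exists_spanning_tree_edges (Fintype.card_fin _)
  set α : ℝ := (∑ j, φ j) / (n + 1)
  have hψ : ∑ j, (α - φ j) = 0 := by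
    rw [Finset.sum_sub_distrib, Finset.sum_const, Finset.card_univ, Fintype.card_fin,
      nsmul_eq_mul, Nat.cast_add_one, mul_div_cancel₀ _ n.cast_add_one_ne_zero, sub_self]
  obtain ⟨θ, hθ⟩ := exists_sum_smul_eq_of_fromEdgeSet_connected e hconn hψ
  refine ⟨e, θ, α, hadj, hinj, hconn, ?_⟩
  simp_rw [Hz_eq_diagonal, list_prod_ofFn_exp_smul_diagonal, ← diagonal_smul]
  congr 1
  ext j
  have hθj : ∑ l, (θ l : ℂ) * (Pi.single (e l).1 1 - Pi.single (e l).2 1 : Fin (n + 1) → ℂ) j =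
      α - φ j := by
    simpa only [Finset.sum_apply, Pi.smul_apply, smul_eq_mul, Pi.sub_apply, Pi.single_apply,
      ofReal_sum, ofReal_mul, ofReal_sub, apply_ite, ofReal_one, ofReal_zero]
      using congrArg ((↑) : ℝ → ℂ) (congrFun hθ j)
  simp only [Pi.smul_apply, smul_eq_mul, ← Complex.exp_add]
  congr 1
  simp only [neg_mul, Finset.sum_neg_distrib, mul_assoc, ← Finset.mul_sum, hθj]
  ring
end

section
/- For any w ∈ SU(2) there exist matrices a, b, c ∈ SU(2) such that w = a σ^x b σ^x c and a b c = I. -/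
/-!
Every `w ∈ SU(2)` has Hermitian part `(tr w / 2) • 1`, so diagonalizing its skew-Hermitian part
diagonalizes `w` itself: `w = a * diag(λ, λ̄) * a⋆` with `a ∈ SU(2)` and `|λ| = 1`. Conjugation
by `σx` swaps diagonal entries, so for `b = diag(ν̄, ν)` with `ν² = λ` one has
`σx b σx b⋆ = diag(λ, λ̄)`; hence `w = a σx b σx c` with `c = b⋆ a⋆`, and `a b c = 1`.
-/

open Matrix Complex

def σx : Matrix (Fin 2) (Fin 2) ℂ := !![0, 1; 1, 0]

open ComplexConjugate

namespace Matrix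

theorem star_diagonal {n α : Type*} [DecidableEq n] [AddMonoid α] [StarAddMonoid α]
    (d : n → α) : star (diagonal d) = diagonal (star d) :=
  diagonal_conjTranspose d

theorem star_eq_adjugate_of_mem_specialUnitaryGroup {n α : Type*} [Fintype n] [DecidableEq n]
    [CommRing α] [StarRing α] {A : Matrix n n α} (hA : A ∈ specialUnitaryGroup n α) :
    star A = adjugate A := by
  have hdet : A.det = 1 := hA.2
  rw [← inv_eq_right_inv (mem_unitaryGroup_iff.mp hA.1), Matrix.inv_def, hdet, Ring.inverse_one,
    one_smul]

theorem star_mem_specialUnitaryGroup {n α : Type*} [Fintype n] [DecidableEq n] [CommRing α]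
    [StarRing α] {A : Matrix n n α} (hA : A ∈ specialUnitaryGroup n α) :
    star A ∈ specialUnitaryGroup n α :=
  (star (⟨A, hA⟩ : specialUnitaryGroup n α)).2

theorem add_adjugate_fin_two {α : Type*} [CommRing α] (A : Matrix (Fin 2) (Fin 2) α) :
    A + adjugate A = A.trace • 1 := by
  ext i j; fin_cases i <;> fin_cases j <;> simp [adjugate_fin_two, trace_fin_two, add_comm]

theorem add_star_eq_trace_smul_one_of_mem_specialUnitaryGroup {α : Type*} [CommRing α]
    [StarRing α] {A : Matrix (Fin 2) (Fin 2) α} (hA : A ∈ specialUnitaryGroup (Fin 2) α) :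
    A + star A = A.trace • 1 := by
  rw [star_eq_adjugate_of_mem_specialUnitaryGroup hA, add_adjugate_fin_two]

theorem exists_unitary_conj_diagonal_of_add_star_eq_smul_one {n : Type*} [Fintype n]
    [DecidableEq n] {w : Matrix n n ℂ} {c : ℂ} (h : w + star w = c • 1) :
    ∃ U ∈ unitaryGroup n ℂ, ∃ d : n → ℂ, w = U * diagonal d * star U := by
  have hH : (I • (w - star w)).IsHermitian := by
    change star _ = _
    rw [star_smul, star_sub, star_star, Complex.star_def, conj_I]
    module
  set U := hH.eigenvectorUnitary
  refine ⟨U, U.2, fun i => c / 2 - I / 2 * hH.eigenvalues i, ?_⟩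
  have hspec := hH.spectral_theorem
  rw [Unitary.conjStarAlgAut_apply] at hspec
  have hd : diagonal (fun i => c / 2 - I / 2 * hH.eigenvalues i) =
      (c / 2) • 1 - (I / 2) • diagonal (RCLike.ofReal ∘ hH.eigenvalues) := by
    ext i j
    by_cases hij : i = j <;> simp [hij]
  rw [hd, mul_sub, sub_mul, mul_smul_comm, mul_smul_comm, smul_mul_assoc, smul_mul_assoc, mul_one,
    ← hspec, Unitary.mul_star_self_of_mem U.2, eq_sub_of_add_eq' h, smul_smul,
    div_mul_eq_mul_div, I_mul_I]
  module

theorem exists_mem_specialUnitaryGroup_conj_diagonal_eq {n : Type*} [Fintype n] [DecidableEq n]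
    [Nonempty n] {U : Matrix n n ℂ} (hU : U ∈ unitaryGroup n ℂ) (d : n → ℂ) :
    ∃ a ∈ specialUnitaryGroup n ℂ, a * diagonal d * star a = U * diagonal d * star U := by
  -- rescaling one column of `U` by `conj (det U)` fixes the determinant
  have hδ : star U.det * U.det = 1 := Unitary.star_mul_self_of_mem (det_of_mem_unitary hU)
  set e := Function.update (1 : n → ℂ) (Classical.arbitrary n) (star U.det)
  have he : ∀ i, star (e i) * e i = 1 := by
    intro i
    by_cases hi : i = Classical.arbitrary n
    · simpa [hi, e, mul_comm] using hδ
    · simp [hi, e]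
  have hDU : diagonal e ∈ unitaryGroup n ℂ := by
    rw [mem_unitaryGroup_iff', star_diagonal, diagonal_mul_diagonal, ← diagonal_one]
    exact congrArg diagonal (funext he)
  have hconj : diagonal e * diagonal d * star (diagonal e) = diagonal d := by
    rw [star_diagonal, diagonal_mul_diagonal, diagonal_mul_diagonal]
    congr 1; ext i
    simp only [Pi.star_apply]
    linear_combination d i * he i
  refine ⟨U * diagonal e, ⟨mul_mem hU hDU, ?_⟩, ?_⟩
  · show (U * diagonal e).det = 1
    rw [det_mul, det_diagonal, Finset.prod_update_of_mem (Finset.mem_univ _)]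
    simpa [mul_comm] using hδ
  · conv_rhs => rw [← hconj]
    simp only [star_mul, mul_assoc]

theorem exists_eq_of_diagonal_mem_specialUnitaryGroup {d : Fin 2 → ℂ}
    (hd : diagonal d ∈ specialUnitaryGroup (Fin 2) ℂ) :
    ∃ z : ℂ, ‖z‖ = 1 ∧ d = ![z, conj z] := by
  have hunit : d 0 * conj (d 0) = 1 := by
    simpa [star_diagonal] using congrFun₂ (mem_unitaryGroup_iff.mp hd.1) 0 0
  have hdet : d 0 * d 1 = 1 := by simpa [det_fin_two] using hd.2
  refine ⟨d 0, ?_, ?_⟩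
  · rw [mul_conj, normSq_eq_norm_sq] at hunit
    exact (pow_eq_one_iff_of_nonneg (norm_nonneg _) two_ne_zero).mp (by exact_mod_cast hunit)
  · ext i; fin_cases i
    · rfl
    · show d 1 = conj (d 0)
      linear_combination conj (d 0) * hdet - d 1 * hunit

theorem exists_mem_specialUnitaryGroup_conj_diagonal {w : Matrix (Fin 2) (Fin 2) ℂ}
    (hw : w ∈ specialUnitaryGroup (Fin 2) ℂ) :
    ∃ a ∈ specialUnitaryGroup (Fin 2) ℂ, ∃ z : ℂ, ‖z‖ = 1 ∧
      w = a * diagonal ![z, conj z] * star a := by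
  obtain ⟨U, hU, d, hwU⟩ := exists_unitary_conj_diagonal_of_add_star_eq_smul_one
    (add_star_eq_trace_smul_one_of_mem_specialUnitaryGroup hw)
  obtain ⟨a, ha, haU⟩ := exists_mem_specialUnitaryGroup_conj_diagonal_eq hU d
  rw [← haU] at hwU
  have hd : diagonal d = star a * w * a := by
    rw [hwU, ← mul_assoc, ← mul_assoc, mem_unitaryGroup_iff'.mp ha.1, one_mul, mul_assoc,
      mem_unitaryGroup_iff'.mp ha.1, mul_one]
  obtain ⟨z, hz, rfl⟩ := exists_eq_of_diagonal_mem_specialUnitaryGroup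
    (hd ▸ mul_mem (mul_mem (star_mem_specialUnitaryGroup ha) hw) ha)
  exact ⟨a, ha, z, hz, hwU⟩

theorem diagonal_mem_specialUnitaryGroup {z : ℂ} (hz : ‖z‖ = 1) :
    diagonal ![z, conj z] ∈ specialUnitaryGroup (Fin 2) ℂ := by
  have h : z * conj z = 1 := by rw [mul_conj, normSq_eq_norm_sq, hz]; simp
  refine ⟨mem_unitaryGroup_iff.mpr ?_, ?_⟩
  · rw [star_diagonal, diagonal_mul_diagonal]
    ext i j; fin_cases i <;> fin_cases j <;> simp [h, mul_comm]
  · simpa [det_fin_two] using h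

end Matrix

theorem Complex.exists_sq_eq_of_norm_eq_one {z : ℂ} (hz : ‖z‖ = 1) :
    ∃ ν : ℂ, ‖ν‖ = 1 ∧ ν ^ 2 = z := by
  obtain ⟨ν, rfl⟩ := IsAlgClosed.exists_pow_nat_eq z two_pos
  have hν : ‖ν‖ ^ 2 = 1 := by simpa using hz
  exact ⟨ν, (pow_eq_one_iff_of_nonneg (norm_nonneg ν) two_ne_zero).mp hν, rfl⟩

theorem σx_mul_diagonal_mul_σx (x y : ℂ) : σx * diagonal ![x, y] * σx = diagonal ![y, x] := by
  ext i j; fin_cases i <;> fin_cases j <;> simp [σx, vecMul, dotProduct, Fin.sum_univ_two]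

theorem σx_mul_diagonal_mul_σx_mul_star (ν : ℂ) :
    σx * diagonal ![conj ν, ν] * σx * star (diagonal ![conj ν, ν]) =
      diagonal ![ν ^ 2, conj ν ^ 2] := by
  rw [σx_mul_diagonal_mul_σx, star_diagonal, diagonal_mul_diagonal]
  congr 1; ext i; fin_cases i <;> simp [sq]

/-- Barenco et al., Lemma 5.1: for any w ∈ SU(2) there exist a, b, c ∈ SU(2)
with w = a σ^x b σ^x c and a b c = I. -/
theorem su2_controlled_factorization (w : Matrix (Fin 2) (Fin 2) ℂ)
    (hw : w ∈ Matrix.specialUnitaryGroup (Fin 2) ℂ) :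
    ∃ a b c : Matrix (Fin 2) (Fin 2) ℂ,
      a ∈ Matrix.specialUnitaryGroup (Fin 2) ℂ ∧
      b ∈ Matrix.specialUnitaryGroup (Fin 2) ℂ ∧
      c ∈ Matrix.specialUnitaryGroup (Fin 2) ℂ ∧
      w = a * σx * b * σx * c ∧ a * b * c = 1 := by
  obtain ⟨a, ha, z, hz, rfl⟩ := exists_mem_specialUnitaryGroup_conj_diagonal hw
  obtain ⟨ν, hν, rfl⟩ := exists_sq_eq_of_norm_eq_one hz
  set b := diagonal ![conj ν, ν]
  have hb : b ∈ specialUnitaryGroup (Fin 2) ℂ := by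
    simpa using diagonal_mem_specialUnitaryGroup (z := conj ν) (by simpa using hν)
  refine ⟨a, b, star b * star a, ha, hb,
    mul_mem (star_mem_specialUnitaryGroup hb) (star_mem_specialUnitaryGroup ha), ?_, ?_⟩
  · rw [map_pow, ← σx_mul_diagonal_mul_σx_mul_star]
    simp only [b, mul_assoc]
  · rw [mul_assoc, ← mul_assoc b, mem_unitaryGroup_iff.mp hb.1, one_mul,
      mem_unitaryGroup_iff.mp ha.1]
end

section
/- The diagonal two-qudit Hamiltonian H' = ∑_{m,n} Ω_{mn} |mn⟩⟨mn| generates, for each time t, the unitary U(t) = ∑_{m,n} e^{−iΩ_{mn}t}|mn⟩⟨mn|; U(t) is a tensor product of local unitaries (U(t) = A ⊗ B for some diagonal unitaries A, B on ℂ^d) for every t if and only if Ω_{mn} + Ω_{pq} = Ω_{mq} + Ω_{pn} for all m,n,p,q. -/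
open Matrix Complex

/-!
A product `A m * B n` of unimodular phases always satisfies the multiplicative rectangle rule
`U_{mn} U_{pq} = U_{mq} U_{pn}`; for `U_{mn} = exp(-i Ω_{mn} t)` holding at every `t`, this
forces the additive rule on `Ω`, since two real frequencies whose phases agree at all times are
equal. Conversely, the additive rule makes `Ω_{mn} = a_m + b_n`, and then
`exp(-i Ω_{mn} t) = exp(-i a_m t) · exp(-i b_n t)`.
-/

theorem exists_eq_add_of_add_eq_add {α β G : Type*} [AddCommGroup G] {f : α → β → G}
    (hf : ∀ m n p q, f m n + f p q = f m q + f p n) :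
    ∃ (a : α → G) (b : β → G), ∀ m n, f m n = a m + b n := by
  rcases isEmpty_or_nonempty (α × β) with _ | ⟨⟨m₀, n₀⟩⟩
  · exact ⟨0, 0, fun m n => isEmptyElim (m, n)⟩
  · refine ⟨fun m => f m n₀, fun n => f m₀ n - f m₀ n₀, fun m n => ?_⟩
    rw [add_sub_assoc', ← hf m n m₀ n₀, add_sub_cancel_right]

namespace Complex

open Real

theorem norm_exp_neg_I_mul_ofReal_mul (x t : ℝ) : ‖exp (-(I * x * t))‖ = 1 := by
  rw [show -(I * x * t) = ((-(x * t) : ℝ) : ℂ) * I by push_cast; ring, norm_exp_ofReal_mul_I]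

theorem exp_neg_I_mul_ofReal_add_mul (x y t : ℝ) :
    exp (-(I * ((x + y : ℝ) : ℂ) * t)) = exp (-(I * x * t)) * exp (-(I * y * t)) := by
  rw [← exp_add]
  push_cast
  ring_nf

theorem eq_of_forall_exp_neg_I_mul_ofReal_mul_eq {x y : ℝ}
    (h : ∀ t : ℝ, exp (-(I * x * t)) = exp (-(I * y * t))) : x = y := by
  by_contra hxy
  have hc : (y : ℂ) - x ≠ 0 := sub_ne_zero.mpr (ofReal_injective.ne (Ne.symm hxy))
  -- at `t = π / (y - x)` the two phases differ by `exp (π i) = -1`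
  have h1 : exp (-(I * x * ((π / (y - x) : ℝ) : ℂ)) - -(I * y * ((π / (y - x) : ℝ) : ℂ))) = 1 := by
    rw [exp_sub, h, div_self (exp_ne_zero _)]
  have harg : -(I * x * ((π / (y - x) : ℝ) : ℂ)) - -(I * y * ((π / (y - x) : ℝ) : ℂ)) = π * I := by
    push_cast
    field_simp
    ring
  rw [harg, exp_pi_mul_I] at h1
  norm_num at h1

end Complex

/-- The diagonal unitary generated at time t by H' = ∑ Ω_{mn}|mn⟩⟨mn| is a
tensor product of diagonal local unitaries for every t iff
Ω_{mn} + Ω_{pq} = Ω_{mq} + Ω_{pn} for all m,n,p,q. -/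
theorem diagonal_hamiltonian_nonentangling_iff (d : ℕ) (Ω : Fin d → Fin d → ℝ) :
    (∀ t : ℝ, ∃ A B : Fin d → ℂ,
        (∀ m, ‖A m‖ = 1) ∧ (∀ n, ‖B n‖ = 1) ∧
        (Matrix.diagonal fun p : Fin d × Fin d =>
            Complex.exp (-(I * (Ω p.1 p.2 : ℂ) * (t : ℂ)))) =
          Matrix.diagonal fun p : Fin d × Fin d => A p.1 * B p.2) ↔
      ∀ m n p q : Fin d, Ω m n + Ω p q = Ω m q + Ω p n := by
  simp only [diagonal_injective.eq_iff, funext_iff, Prod.forall]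
  constructor
  · intro h m n p q
    refine eq_of_forall_exp_neg_I_mul_ofReal_mul_eq fun t => ?_
    obtain ⟨A, B, -, -, hAB⟩ := h t
    rw [exp_neg_I_mul_ofReal_add_mul, exp_neg_I_mul_ofReal_add_mul, hAB, hAB, hAB, hAB]
    ring
  · intro hΩ t
    obtain ⟨a, b, hab⟩ := exists_eq_add_of_add_eq_add hΩ
    refine ⟨fun m => exp (-(I * a m * t)), fun n => exp (-(I * b n * t)),
      fun m => norm_exp_neg_I_mul_ofReal_mul _ _, fun n => norm_exp_neg_I_mul_ofReal_mul _ _,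
      fun m n => ?_⟩
    rw [hab, exp_neg_I_mul_ofReal_add_mul]
end

section
/- Let G be a connected graph on d vertices and let d(j,k) denote graph distance. Then for any edge-allowed Givens gate set, any Givens rotation on an arbitrary plane (j,k) can be realized as a product of at most 2·d(j,k) − 1 Givens rotations on planes that are edges of G (conjugating by swap-like rotations along a shortest path). -/
open Matrix

section PermMatrix

variable {n R : Type*} [Fintype n] [DecidableEq n]

theorem Matrix.permMatrix_mem_unitaryGroup [CommRing R] [StarRing R] (σ : Equiv.Perm n) :
    σ.permMatrix R ∈ unitaryGroup n R := by
  rw [mem_unitaryGroup_iff, star_eq_conjTranspose, conjTranspose_permMatrix, ← permMatrix_mul,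
    inv_mul_cancel, permMatrix_one]

theorem Matrix.permMatrix_mul_inv_mul [NonAssocSemiring R] (σ : Equiv.Perm n) (A : Matrix n n R) :
    σ.permMatrix R * A * σ⁻¹.permMatrix R = A.submatrix σ σ := by
  rw [PEquiv.toMatrix_toPEquiv_mul, PEquiv.mul_toMatrix_toPEquiv, submatrix_submatrix]
  rfl

theorem Matrix.swap_permMatrix_mul_self [NonAssocSemiring R] (a b : n) :
    (Equiv.swap a b).permMatrix R * (Equiv.swap a b).permMatrix R = 1 := by
  rw [← permMatrix_mul, Equiv.swap_mul_self, permMatrix_one]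

end PermMatrix

variable {d : ℕ}

theorem isGivensOn_swap_permMatrix (a b : Fin d) :
    IsGivensOn a b ((Equiv.swap a b).permMatrix ℂ) := by
  refine ⟨permMatrix_mem_unitaryGroup _, fun p q hpq => ?_⟩
  simp only [Set.mem_insert_iff, Set.mem_singleton_iff, not_or] at hpq
  simp only [PEquiv.toMatrix_apply, Equiv.toPEquiv_apply, Option.mem_def, Option.some_inj]
  rcases hpq with ⟨hpa, hpb⟩ | ⟨hqa, hqb⟩
  · rw [Equiv.swap_apply_of_ne_of_ne hpa hpb]
  · exact if_congr (by rw [← Equiv.eq_symm_apply, Equiv.symm_swap,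
      Equiv.swap_apply_of_ne_of_ne hqa hqb, eq_comm]) rfl rfl

theorem IsGivensOn.permMatrix_conj {j k : Fin d} {A : Matrix (Fin d) (Fin d) ℂ}
    (hA : IsGivensOn j k A) (σ : Equiv.Perm (Fin d)) :
    IsGivensOn (σ⁻¹ j) (σ⁻¹ k) (σ.permMatrix ℂ * A * σ⁻¹.permMatrix ℂ) := by
  obtain ⟨hunitary, hid⟩ := hA
  refine ⟨mul_mem (mul_mem (permMatrix_mem_unitaryGroup σ) hunitary)
    (permMatrix_mem_unitaryGroup σ⁻¹), fun p q hpq => ?_⟩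
  have hmove : ∀ r : Fin d,
      r ∉ ({σ⁻¹ j, σ⁻¹ k} : Set (Fin d)) → σ r ∉ ({j, k} : Set (Fin d)) := by
    intro r
    simp only [Set.mem_insert_iff, Set.mem_singleton_iff, Equiv.Perm.eq_inv_iff_eq, imp_self]
  rw [permMatrix_mul_inv_mul, submatrix_apply, hid (σ p) (σ q) (hpq.imp (hmove p) (hmove q))]
  exact if_congr σ.injective.eq_iff rfl rfl

def IsEdgeGivens (G : SimpleGraph (Fin d)) (B : Matrix (Fin d) (Fin d) ℂ) : Prop :=
  ∃ m n : Fin d, G.Adj m n ∧ IsGivensOn m n B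

/-- Along a walk `j = j₀, j₁, …, jₗ = k`, conjugating by the swap of `j₀, j₁` reduces the
plane `(j, k)` to `(j₁, k)`; each step costs two swaps and the last edge one rotation. -/
theorem SimpleGraph.Walk.exists_isEdgeGivens_prod {G : SimpleGraph (Fin d)} {j k : Fin d}
    (w : G.Walk j k) (hjk : j ≠ k) {A : Matrix (Fin d) (Fin d) ℂ} (hA : IsGivensOn j k A) :
    ∃ L : List (Matrix (Fin d) (Fin d) ℂ),
      L.length ≤ 2 * w.length - 1 ∧ (∀ B ∈ L, IsEdgeGivens G B) ∧ L.prod = A := by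
  induction w generalizing A with
  | nil => exact absurd rfl hjk
  | @cons j j' k hadj w ih =>
    by_cases hj'k : j' = k
    · subst hj'k
      refine ⟨[A], ?_, by simpa using ⟨j, j', hadj, hA⟩, List.prod_singleton⟩
      simp only [List.length_singleton, SimpleGraph.Walk.length_cons]
      omega
    set S := (Equiv.swap j j').permMatrix ℂ
    have hconj : IsGivensOn j' k (S * A * S) := by
      have h := hA.permMatrix_conj (Equiv.swap j j')
      rwa [Equiv.swap_inv, Equiv.swap_apply_left,
        Equiv.swap_apply_of_ne_of_ne (Ne.symm hjk) (Ne.symm hj'k)] at h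
    have hS : IsEdgeGivens G S := ⟨j, j', hadj, isGivensOn_swap_permMatrix j j'⟩
    obtain ⟨L, hlen, hedge, hprod⟩ := ih hj'k hconj
    have hw : 0 < w.length := Nat.pos_of_ne_zero (fun h => hj'k (w.eq_of_length_eq_zero h))
    refine ⟨S :: (L ++ [S]), ?_, ?_, ?_⟩
    · simp only [List.length_cons, List.length_append, List.length_nil,
        SimpleGraph.Walk.length_cons]
      omega
    · simp only [List.mem_cons, List.mem_append, List.not_mem_nil, or_false]
      rintro B (rfl | hB | rfl)
      exacts [hS, hedge B hB, hS]
    · rw [List.prod_cons, List.prod_append, List.prod_singleton, hprod, mul_assoc, mul_assoc,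
        swap_permMatrix_mul_self, mul_one, ← mul_assoc, swap_permMatrix_mul_self, one_mul]

/-- In a connected coupling graph, any Givens rotation on an arbitrary plane
(j,k) is a product of at most 2·d(j,k) − 1 Givens rotations on planes which are
edges of the graph. -/
theorem givens_via_path_conjugation (d : ℕ) (G : SimpleGraph (Fin d))
    (hG : G.Connected) (j k : Fin d) (hjk : j ≠ k)
    (A : Matrix (Fin d) (Fin d) ℂ) (hA : IsGivensOn j k A) :
    ∃ L : List (Matrix (Fin d) (Fin d) ℂ),
      L.length ≤ 2 * G.dist j k - 1 ∧
      (∀ B ∈ L, ∃ m n : Fin d, G.Adj m n ∧ IsGivensOn m n B) ∧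
      L.prod = A := by
  obtain ⟨w, hw⟩ := (hG j k).exists_walk_length_eq_dist
  rw [← hw]
  exact w.exists_isEdgeGivens_prod hjk hA
end
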